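/- arXiv:1407.1790 — 3 statements merged into one kernel-verified Lean document; each statement's English description precedes it below -/
import Mathlib

section
/- There exists a unique bounded function u^h : ℝ^ν × I_h → ℝ satisfying the fixed point equation u^h = A^h u^h, i.e. u^h(x,a) = min_{b ∈ I_h(a)} [(1−λh)·u^h(x + h·g(x,a), b) + h·f(x,a)] for all x ∈ ℝ^ν and a ∈ I_h; moreover, for each a ∈ I_h the map x ↦ u^h(x,a) is continuous on ℝ^ν. -/
noncomputable section

abbrev E (ν : ℕ) := EuclideanSpace ℝ (Fin ν)

/-- The discrete set of control values `I_h = {i·h : i = 0,…,N}`. -/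
def Ih (h : ℝ) (N : ℕ) : Set ℝ := {r : ℝ | ∃ i : ℕ, i ≤ N ∧ r = i * h}

/-- The discrete dynamic programming operator
`(A^h w)(x,a) = min_{b ∈ I_h, b ≥ a} [(1−λh)·w(x + h·g(x,a), b) + h·f(x,a)]`. -/
def Aop {ν : ℕ} (lam h : ℝ) (N : ℕ)
    (g : E ν → ℝ → E ν) (f : E ν → ℝ → ℝ)
    (w : E ν → ℝ → ℝ) (x : E ν) (a : ℝ) : ℝ :=
  sInf {v : ℝ | ∃ b ∈ Ih h N, a ≤ b ∧
    v = (1 - lam * h) * w (x + h • g x a) b + h * f x a}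

/-!
The operator `A^h` contracts the sup norm over `E ν × I_h` by the factor `1 - λh < 1`, because
a minimum over a finite set is `1`-Lipschitz in the family it minimises; and it maps functions
continuous in `x` to such functions, being a finite minimum of continuous ones. Banach's fixed
point theorem on the complete space of `I_h`-indexed tuples of bounded continuous functions
yields `u^h`. Uniqueness among all bounded solutions follows by applying the contraction
estimate to the supremum of `|v - u^h|`.
-/

open Set
open scoped BoundedContinuousFunction

section FiniteInf

variable {ι α : Type*} [LinearOrder α] [AddCommGroup α] [IsOrderedAddMonoid α]

lemma Finset.abs_inf'_sub_inf'_le {s : Finset ι} (hs : s.Nonempty) {F G : ι → α} {c : α}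
    (hFG : ∀ i ∈ s, |F i - G i| ≤ c) : |s.inf' hs F - s.inf' hs G| ≤ c := by
  have key : ∀ F G : ι → α, (∀ i ∈ s, |F i - G i| ≤ c) → s.inf' hs F ≤ s.inf' hs G + c := by
    intro F G hFG
    obtain ⟨i, hi, hGi⟩ := s.exists_mem_eq_inf' hs G
    rw [hGi]
    exact (s.inf'_le F hi).trans (sub_le_iff_le_add'.mp (abs_le.mp (hFG i hi)).2)
  rw [abs_sub_le_iff, sub_le_iff_le_add', sub_le_iff_le_add']
  exact ⟨key F G hFG, key G F fun i hi => abs_sub_comm (F i) (G i) ▸ hFG i hi⟩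

end FiniteInf

lemma nonpos_of_forall_le_mul {α : Type*} {d : α → ℝ} {k : ℝ} (hk : k < 1)
    (hd : BddAbove (range d)) (hcontr : ∀ c, (∀ i, d i ≤ c) → ∀ i, d i ≤ k * c) (i : α) :
    d i ≤ 0 := by
  have : Nonempty α := ⟨i⟩
  have hle : ∀ j, d j ≤ ⨆ j, d j := le_ciSup hd
  have hsup : (⨆ j, d j) ≤ k * ⨆ j, d j := ciSup_le (hcontr _ hle)
  nlinarith [hle i]

lemma continuous_of_norm_sub_le {X Y : Type*} [SeminormedAddCommGroup X]
    [SeminormedAddCommGroup Y] {φ : X → Y} {L : ℝ} (hφ : ∀ x x', ‖φ x - φ x'‖ ≤ L * ‖x - x'‖) :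
    Continuous φ :=
  (LipschitzWith.of_dist_le' (K := L) fun x x' => by
    simpa only [dist_eq_norm] using hφ x x').continuous

section Grid

variable {h : ℝ} {N : ℕ}

def IhFin (h : ℝ) (N : ℕ) : Finset ℝ := (Finset.range (N + 1)).image fun i : ℕ => (i : ℝ) * h

@[simp]
lemma mem_IhFin {a : ℝ} : a ∈ IhFin h N ↔ a ∈ Ih h N := by
  simp only [IhFin, Finset.mem_image, Finset.mem_range, Nat.lt_succ_iff, Ih, mem_ofPred_eq]
  exact exists_congr fun i => and_congr_right fun _ => eq_comm

lemma Ih_subset_Icc (hh : 0 ≤ h) (hNh : (N : ℝ) * h = 1) : Ih h N ⊆ Icc 0 1 := by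
  rintro _ ⟨i, hiN, rfl⟩
  exact ⟨by positivity, hNh ▸ mul_le_mul_of_nonneg_right (by exact_mod_cast hiN) hh⟩

lemma filter_IhFin_nonempty {a : ℝ} (ha : a ∈ Ih h N) : {b ∈ IhFin h N | a ≤ b}.Nonempty :=
  ⟨a, Finset.mem_filter.mpr ⟨mem_IhFin.mpr ha, le_rfl⟩⟩

end Grid

section GridExtend

variable {β X : Type*} [DecidableEq β] [TopologicalSpace X] {s : Finset β}

def gridExtend (s : Finset β) (w : s → X →ᵇ ℝ) (x : X) (b : β) : ℝ :=
  if hb : b ∈ s then w ⟨b, hb⟩ x else 0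

lemma gridExtend_of_mem (w : s → X →ᵇ ℝ) (x : X) {b : β} (hb : b ∈ s) :
    gridExtend s w x b = w ⟨b, hb⟩ x :=
  dif_pos hb

lemma continuous_gridExtend (w : s → X →ᵇ ℝ) {b : β} (hb : b ∈ s) :
    Continuous (gridExtend s w · b) := by
  simp_rw [gridExtend_of_mem w _ hb]
  exact (w _).continuous

lemma abs_gridExtend_le (w : s → X →ᵇ ℝ) (x : X) (b : β) : |gridExtend s w x b| ≤ ‖w‖ := by
  unfold gridExtend
  split_ifs
  · exact ((w _).norm_coe_le_norm x).trans (norm_le_pi_norm w _)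
  · simp

lemma abs_gridExtend_sub_le (v w : s → X →ᵇ ℝ) (x : X) (b : β) :
    |gridExtend s v x b - gridExtend s w x b| ≤ dist v w := by
  unfold gridExtend
  split_ifs
  · rw [← Real.dist_eq]
    exact ((v _).dist_coe_le_dist x).trans (dist_le_pi_dist v w _)
  · simp

end GridExtend

section Aop

variable {ν : ℕ} {lam h : ℝ} {N : ℕ} {g : E ν → ℝ → E ν} {f : E ν → ℝ → ℝ}
  {v w : E ν → ℝ → ℝ} {x : E ν} {a : ℝ}

lemma Aop_eq_inf' (ha : a ∈ Ih h N) :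
    Aop lam h N g f w x a =
      {b ∈ IhFin h N | a ≤ b}.inf' (filter_IhFin_nonempty ha)
        fun b => (1 - lam * h) * w (x + h • g x a) b + h * f x a := by
  rw [Aop, Finset.inf'_eq_csInf_image]
  congr 1
  ext r
  simp only [Finset.coe_filter, mem_IhFin, mem_image, mem_ofPred_eq]
  constructor
  · rintro ⟨b, hb, hab, rfl⟩
    exact ⟨b, ⟨hb, hab⟩, rfl⟩
  · rintro ⟨b, ⟨hb, hab⟩, rfl⟩
    exact ⟨b, hb, hab, rfl⟩

lemma Aop_zero (ha : a ∈ Ih h N) : Aop lam h N g f 0 x a = h * f x a := by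
  simp [Aop_eq_inf' ha, Finset.inf'_const]

lemma abs_Aop_sub_Aop_le {c : ℝ} (ha : a ∈ Ih h N)
    (hvw : ∀ y, ∀ b ∈ Ih h N, |v y b - w y b| ≤ c) :
    |Aop lam h N g f v x a - Aop lam h N g f w x a| ≤ |1 - lam * h| * c := by
  rw [Aop_eq_inf' ha, Aop_eq_inf' ha]
  refine Finset.abs_inf'_sub_inf'_le _ fun b hb => ?_
  rw [add_sub_add_right_eq_sub, ← mul_sub, abs_mul]
  exact mul_le_mul_of_nonneg_left (hvw _ b (mem_IhFin.mp (Finset.mem_filter.mp hb).1))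
    (abs_nonneg _)

lemma abs_Aop_le {M Mf : ℝ} (ha : a ∈ Ih h N) (hw : ∀ y, ∀ b ∈ Ih h N, |w y b| ≤ M)
    (hf : |f x a| ≤ Mf) : |Aop lam h N g f w x a| ≤ |1 - lam * h| * M + |h| * Mf := by
  have hshift := abs_Aop_sub_Aop_le (lam := lam) (g := g) (f := f) (x := x) (w := 0) ha
    (by simpa using hw)
  rw [Aop_zero ha] at hshift
  calc |Aop lam h N g f w x a|
      = |(Aop lam h N g f w x a - h * f x a) + h * f x a| := by rw [sub_add_cancel]
    _ ≤ |Aop lam h N g f w x a - h * f x a| + |h| * |f x a| := by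
        rw [← abs_mul]; exact abs_add_le _ _
    _ ≤ |1 - lam * h| * M + |h| * Mf := by gcongr

lemma continuous_Aop (ha : a ∈ Ih h N) (hw : ∀ b ∈ Ih h N, Continuous (w · b))
    (hg : Continuous (g · a)) (hf : Continuous (f · a)) :
    Continuous (Aop lam h N g f w · a) := by
  simp_rw [Aop_eq_inf' ha]
  refine Continuous.finset_inf'_apply _ fun b hb => ?_
  have hb : b ∈ Ih h N := mem_IhFin.mp (Finset.mem_filter.mp hb).1
  fun_prop

end Aop

section Existence

variable {ν : ℕ} {lam h : ℝ} {N : ℕ} {g : E ν → ℝ → E ν} {f : E ν → ℝ → ℝ}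

lemma exists_contractingWith_Aop (hk : |1 - lam * h| < 1)
    (hg : ∀ a ∈ Ih h N, Continuous (g · a)) (hf : ∀ a ∈ Ih h N, Continuous (f · a))
    {Mf : ℝ} (hfb : ∀ x, ∀ a ∈ Ih h N, |f x a| ≤ Mf) :
    ∃ T : (IhFin h N → E ν →ᵇ ℝ) → (IhFin h N → E ν →ᵇ ℝ),
      ContractingWith ‖1 - lam * h‖₊ T ∧
        ∀ w a x, T w a x = Aop lam h N g f (gridExtend (IhFin h N) w) x a := by
  have hmem : ∀ a : IhFin h N, (a : ℝ) ∈ Ih h N := fun a => mem_IhFin.mp a.2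
  refine ⟨fun w a => .ofNormedAddCommGroup (Aop lam h N g f (gridExtend _ w) · a)
      (continuous_Aop (hmem a) (fun b hb => continuous_gridExtend w (mem_IhFin.mpr hb))
        (hg a (hmem a)) (hf a (hmem a)))
      (|1 - lam * h| * ‖w‖ + |h| * Mf)
      (fun x => abs_Aop_le (hmem a) (fun y b _ => abs_gridExtend_le w y b) (hfb x a (hmem a))),
    ⟨by rwa [← NNReal.coe_lt_one, coe_nnnorm, Real.norm_eq_abs], ?_⟩, fun _ _ _ => rfl⟩
  refine LipschitzWith.of_dist_le_mul fun v w => ?_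
  rw [coe_nnnorm, Real.norm_eq_abs]
  refine (dist_pi_le_iff (by positivity)).2 fun a =>
    (BoundedContinuousFunction.dist_le (by positivity)).2 fun x => ?_
  rw [Real.dist_eq]
  exact abs_Aop_sub_Aop_le (hmem a) fun y b _ => abs_gridExtend_sub_le v w y b

lemma eq_of_bounded_fixed_Aop {u v : E ν → ℝ → ℝ} (hk : |1 - lam * h| < 1)
    (hu : ∃ M, ∀ x, ∀ a ∈ Ih h N, |u x a| ≤ M) (hv : ∃ M, ∀ x, ∀ a ∈ Ih h N, |v x a| ≤ M)
    (hufix : ∀ x, ∀ a ∈ Ih h N, u x a = Aop lam h N g f u x a)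
    (hvfix : ∀ x, ∀ a ∈ Ih h N, v x a = Aop lam h N g f v x a) :
    ∀ x, ∀ a ∈ Ih h N, v x a = u x a := by
  obtain ⟨Mu, hMu⟩ := hu
  obtain ⟨Mv, hMv⟩ := hv
  let d : E ν × Ih h N → ℝ := fun p => |v p.1 p.2 - u p.1 p.2|
  have hd : BddAbove (range d) := ⟨Mv + Mu, by
    rintro _ ⟨⟨x, a, ha⟩, rfl⟩
    exact (abs_sub _ _).trans (add_le_add (hMv x a ha) (hMu x a ha))⟩
  have hcontr : ∀ c, (∀ p, d p ≤ c) → ∀ p, d p ≤ |1 - lam * h| * c := by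
    rintro c hc ⟨x, a, ha⟩
    change |v x a - u x a| ≤ _
    rw [hvfix x a ha, hufix x a ha]
    exact abs_Aop_sub_Aop_le ha fun y b hb => hc (y, ⟨b, hb⟩)
  intro x a ha
  exact sub_eq_zero.mp (abs_nonpos_iff.mp (nonpos_of_forall_le_mul hk hd hcontr (x, ⟨a, ha⟩)))

end Existence

theorem Ah_fixed_point_exists_unique_general {ν : ℕ}
    (lam h : ℝ) (hlam : 0 < lam) (hh : 0 < h) (hhl : h < 1 / lam)
    (N : ℕ) (hNh : (N : ℝ) * h = 1)
    (g : E ν → ℝ → E ν) (f : E ν → ℝ → ℝ)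
    (Lg Lf Mf : ℝ)
    (hgLip : ∀ x x' : E ν, ∀ a ∈ Set.Icc (0:ℝ) 1, ∀ a' ∈ Set.Icc (0:ℝ) 1,
      ‖g x a - g x' a'‖ ≤ Lg * (‖x - x'‖ + |a - a'|))
    (hfLip : ∀ x x' : E ν, ∀ a ∈ Set.Icc (0:ℝ) 1, ∀ a' ∈ Set.Icc (0:ℝ) 1,
      |f x a - f x' a'| ≤ Lf * (‖x - x'‖ + |a - a'|))
    (hfBdd : ∀ x : E ν, ∀ a ∈ Set.Icc (0:ℝ) 1, |f x a| ≤ Mf) :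
    ∃ u : E ν → ℝ → ℝ,
      ((∃ M : ℝ, ∀ x : E ν, ∀ a ∈ Ih h N, |u x a| ≤ M) ∧
        (∀ x : E ν, ∀ a ∈ Ih h N, u x a = Aop lam h N g f u x a) ∧
        (∀ a ∈ Ih h N, Continuous fun x : E ν => u x a)) ∧
      ∀ v : E ν → ℝ → ℝ,
        (∃ M : ℝ, ∀ x : E ν, ∀ a ∈ Ih h N, |v x a| ≤ M) →
        (∀ x : E ν, ∀ a ∈ Ih h N, v x a = Aop lam h N g f v x a) →
        ∀ x : E ν, ∀ a ∈ Ih h N, v x a = u x a := by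
  have hI := Ih_subset_Icc hh.le hNh
  have hk : |1 - lam * h| < 1 := by
    have hlh : lam * h < 1 := (lt_div_iff₀' hlam).mp (one_div lam ▸ hhl)
    rw [abs_lt]
    constructor <;> nlinarith [mul_pos hlam hh]
  have hg : ∀ a ∈ Ih h N, Continuous (g · a) := fun a ha =>
    continuous_of_norm_sub_le fun x x' => by simpa using hgLip x x' a (hI ha) a (hI ha)
  have hf : ∀ a ∈ Ih h N, Continuous (f · a) := fun a ha =>
    continuous_of_norm_sub_le fun x x' => by simpa using hfLip x x' a (hI ha) a (hI ha)
  obtain ⟨T, hT, hTAop⟩ := exists_contractingWith_Aop hk hg hf fun x a ha => hfBdd x a (hI ha)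
  set w := ContractingWith.fixedPoint T hT
  have hbdd : ∃ M, ∀ x, ∀ a ∈ Ih h N, |gridExtend _ w x a| ≤ M :=
    ⟨‖w‖, fun x a _ => abs_gridExtend_le w x a⟩
  have hfix : ∀ x, ∀ a ∈ Ih h N,
      gridExtend _ w x a = Aop lam h N g f (gridExtend _ w) x a := fun x a ha => by
    rw [gridExtend_of_mem w x (mem_IhFin.mpr ha), ← hTAop w ⟨a, _⟩, hT.fixedPoint_isFixedPt]
  exact ⟨gridExtend _ w,
    ⟨hbdd, hfix, fun a ha => continuous_gridExtend w (mem_IhFin.mpr ha)⟩,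
    fun v hv hvfix => eq_of_bounded_fixed_Aop hk hbdd hv hfix hvfix⟩

theorem Ah_fixed_point_exists_unique {ν : ℕ} (hν : 1 ≤ ν)
    (lam h : ℝ) (hlam : 0 < lam) (hh : 0 < h) (hhl : h < 1 / lam)
    (N : ℕ) (hN : 0 < N) (hNh : (N : ℝ) * h = 1)
    (g : E ν → ℝ → E ν) (f : E ν → ℝ → ℝ)
    (Lg Mg Lf Mf : ℝ) (hLg : 0 < Lg) (hMg : 0 < Mg) (hLf : 0 < Lf) (hMf : 0 < Mf)
    (hgLip : ∀ x x' : E ν, ∀ a ∈ Set.Icc (0:ℝ) 1, ∀ a' ∈ Set.Icc (0:ℝ) 1,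
      ‖g x a - g x' a'‖ ≤ Lg * (‖x - x'‖ + |a - a'|))
    (hgBdd : ∀ x : E ν, ∀ a ∈ Set.Icc (0:ℝ) 1, ‖g x a‖ ≤ Mg)
    (hfLip : ∀ x x' : E ν, ∀ a ∈ Set.Icc (0:ℝ) 1, ∀ a' ∈ Set.Icc (0:ℝ) 1,
      |f x a - f x' a'| ≤ Lf * (‖x - x'‖ + |a - a'|))
    (hfBdd : ∀ x : E ν, ∀ a ∈ Set.Icc (0:ℝ) 1, |f x a| ≤ Mf) :
    ∃ u : E ν → ℝ → ℝ,
      ((∃ M : ℝ, ∀ x : E ν, ∀ a ∈ Ih h N, |u x a| ≤ M) ∧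
        (∀ x : E ν, ∀ a ∈ Ih h N, u x a = Aop lam h N g f u x a) ∧
        (∀ a ∈ Ih h N, Continuous fun x : E ν => u x a)) ∧
      ∀ v : E ν → ℝ → ℝ,
        (∃ M : ℝ, ∀ x : E ν, ∀ a ∈ Ih h N, |v x a| ≤ M) →
        (∀ x : E ν, ∀ a ∈ Ih h N, v x a = Aop lam h N g f v x a) →
        ∀ x : E ν, ∀ a ∈ Ih h N, v x a = u x a :=
  Ah_fixed_point_exists_unique_general lam h hlam hh hhl N hNh g f Lg Lf Mf hgLip hfLip hfBdd
end
end

section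
/- Assume λ > L_g. If u^h : ℝ^ν × I_h → ℝ is a bounded function with u^h = A^h u^h, then for every a ∈ I_h the map x ↦ u^h(x,a) is Lipschitz continuous with constant L_f/(λ − L_g): for all x, y ∈ ℝ^ν and a ∈ I_h, |u^h(x,a) − u^h(y,a)| ≤ (L_f/(λ − L_g))·‖x − y‖. -/
noncomputable section

set_option maxHeartbeats 1600000 in
theorem Ah_fixed_point_lipschitz {ν : ℕ} (hν : 1 ≤ ν)
    (lam h : ℝ) (hlam : 0 < lam) (hh : 0 < h) (hhl : h < 1 / lam)
    (N : ℕ) (hN : 0 < N) (hNh : (N : ℝ) * h = 1)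
    (g : E ν → ℝ → E ν) (f : E ν → ℝ → ℝ)
    (Lg Mg Lf Mf : ℝ) (hLg : 0 < Lg) (hMg : 0 < Mg) (hLf : 0 < Lf) (hMf : 0 < Mf)
    (hgLip : ∀ x x' : E ν, ∀ a ∈ Set.Icc (0:ℝ) 1, ∀ a' ∈ Set.Icc (0:ℝ) 1,
      ‖g x a - g x' a'‖ ≤ Lg * (‖x - x'‖ + |a - a'|))
    (hgBdd : ∀ x : E ν, ∀ a ∈ Set.Icc (0:ℝ) 1, ‖g x a‖ ≤ Mg)
    (hfLip : ∀ x x' : E ν, ∀ a ∈ Set.Icc (0:ℝ) 1, ∀ a' ∈ Set.Icc (0:ℝ) 1,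
      |f x a - f x' a'| ≤ Lf * (‖x - x'‖ + |a - a'|))
    (hfBdd : ∀ x : E ν, ∀ a ∈ Set.Icc (0:ℝ) 1, |f x a| ≤ Mf)
    (hgt : Lg < lam)
    (u : E ν → ℝ → ℝ)
    (huBdd : ∃ M : ℝ, ∀ x : E ν, ∀ a ∈ Ih h N, |u x a| ≤ M)
    (huFix : ∀ x : E ν, ∀ a ∈ Ih h N, u x a = Aop lam h N g f u x a) :
    ∀ x y : E ν, ∀ a ∈ Ih h N,
      |u x a - u y a| ≤ (Lf / (lam - Lg)) * ‖x - y‖ := by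
  -- setup
  obtain ⟨M0, hM0⟩ := huBdd
  set M := max M0 0 with hMdef
  have hM : ∀ x : E ν, ∀ a ∈ Ih h N, |u x a| ≤ M :=
    fun x a ha => (hM0 x a ha).trans (le_max_left _ _)
  have hMnn : (0:ℝ) ≤ M := le_max_right _ _
  have hlh : lam * h < 1 := (lt_div_iff₀' hlam).mp hhl
  have hlh0 : 0 ≤ 1 - lam * h := by nlinarith [mul_pos hlam hh]
  have hgl : 0 < lam - Lg := sub_pos.mpr hgt
  set q : ℝ := (1 - lam * h) * (1 + Lg * h) with hqdef
  have hq0 : 0 ≤ q := by positivity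
  have hq1 : q ≤ 1 - (lam - Lg) * h := by nlinarith [mul_pos (mul_pos hlam hLg) (mul_pos hh hh)]
  have hqlt : q < 1 := lt_of_le_of_lt hq1 (by nlinarith [mul_pos hgl hh])
  have hIcc : ∀ a ∈ Ih h N, a ∈ Set.Icc (0:ℝ) 1 := by
    rintro a ⟨i, hi, rfl⟩
    constructor
    · positivity
    · calc (i:ℝ) * h ≤ (N:ℝ) * h := by
            have : (i:ℝ) ≤ (N:ℝ) := by exact_mod_cast hi
            nlinarith
        _ = 1 := hNh
  -- the candidate set
  set S : E ν → ℝ → Set ℝ := fun x a =>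
    {v : ℝ | ∃ b ∈ Ih h N, a ≤ b ∧
      v = (1 - lam * h) * u (x + h • g x a) b + h * f x a} with hSdef
  have hSne : ∀ x : E ν, ∀ a ∈ Ih h N, (S x a).Nonempty := by
    intro x a ha
    exact ⟨_, a, ha, le_refl a, rfl⟩
  have hSbdd : ∀ x : E ν, ∀ a ∈ Ih h N, BddBelow (S x a) := by
    intro x a ha
    refine ⟨-((1 - lam * h) * M + h * Mf), ?_⟩
    rintro v ⟨b, hb, hab, rfl⟩
    have h1 : |u (x + h • g x a) b| ≤ M := hM _ b hb
    have h2 : |f x a| ≤ Mf := hfBdd x a (hIcc a ha)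
    have := abs_le.mp h1
    have := abs_le.mp h2
    nlinarith [hh.le, hlh0]
  -- main induction
  have key : ∀ n : ℕ, ∀ x y : E ν, ∀ a ∈ Ih h N,
      |u x a - u y a| ≤ h * Lf * ‖x - y‖ * (∑ k ∈ Finset.range n, q ^ k)
        + (1 - lam * h) ^ n * (2 * M) := by
    intro n
    induction n with
    | zero =>
      intro x y a ha
      simp only [Finset.range_zero, Finset.sum_empty, mul_zero, pow_zero, one_mul, zero_add]
      have h1 := abs_le.mp (hM x a ha)
      have h2 := abs_le.mp (hM y a ha)
      rw [abs_sub_le_iff]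
      constructor <;> linarith
    | succ n ih =>
      intro x y a ha
      have haI := hIcc a ha
      set x' := x + h • g x a with hx'
      set y' := y + h • g y a with hy'
      have hdist : ‖x' - y'‖ ≤ (1 + Lg * h) * ‖x - y‖ := by
        have : x' - y' = (x - y) + h • (g x a - g y a) := by
          rw [hx', hy', smul_sub]; abel
        rw [this]
        calc ‖(x - y) + h • (g x a - g y a)‖ ≤ ‖x - y‖ + ‖h • (g x a - g y a)‖ :=
              norm_add_le _ _
          _ = ‖x - y‖ + h * ‖g x a - g y a‖ := by
              rw [norm_smul, Real.norm_eq_abs, abs_of_pos hh]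
          _ ≤ ‖x - y‖ + h * (Lg * (‖x - y‖ + |a - a|)) := by
              gcongr; exact hgLip x y a haI a haI
          _ = (1 + Lg * h) * ‖x - y‖ := by rw [sub_self, abs_zero]; ring
      set D : ℝ := h * Lf * ‖x - y‖ * (∑ k ∈ Finset.range (n+1), q ^ k)
        + (1 - lam * h) ^ (n+1) * (2 * M) with hDdef
      have hmain : ∀ b ∈ Ih h N,
          |((1 - lam * h) * u x' b + h * f x a) -
            ((1 - lam * h) * u y' b + h * f y a)| ≤ D := by
        intro b hb
        have hu := ih x' y' b hb
        have hf : |f x a - f y a| ≤ Lf * ‖x - y‖ := by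
          have := hfLip x y a haI a haI
          rwa [sub_self, abs_zero, add_zero] at this
        have hsum0 : (0:ℝ) ≤ ∑ k ∈ Finset.range n, q ^ k :=
          Finset.sum_nonneg fun k _ => pow_nonneg hq0 k
        have step1 : ((1 - lam * h) * u x' b + h * f x a) -
            ((1 - lam * h) * u y' b + h * f y a)
            = (1 - lam * h) * (u x' b - u y' b) + h * (f x a - f y a) := by ring
        rw [step1]
        calc |(1 - lam * h) * (u x' b - u y' b) + h * (f x a - f y a)|
            ≤ |(1 - lam * h) * (u x' b - u y' b)| + |h * (f x a - f y a)| := abs_add_le _ _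
          _ = (1 - lam * h) * |u x' b - u y' b| + h * |f x a - f y a| := by
              rw [abs_mul, abs_mul, abs_of_nonneg hlh0, abs_of_pos hh]
          _ ≤ (1 - lam * h) * (h * Lf * ‖x' - y'‖ * (∑ k ∈ Finset.range n, q ^ k)
                + (1 - lam * h) ^ n * (2 * M)) + h * (Lf * ‖x - y‖) := by gcongr
          _ ≤ (1 - lam * h) * (h * Lf * ((1 + Lg * h) * ‖x - y‖) * (∑ k ∈ Finset.range n, q ^ k)
                + (1 - lam * h) ^ n * (2 * M)) + h * (Lf * ‖x - y‖) := by gcongr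
          _ = h * Lf * ‖x - y‖ * (q * (∑ k ∈ Finset.range n, q ^ k) + 1)
                + (1 - lam * h) ^ (n+1) * (2 * M) := by rw [hqdef]; ring
          _ = D := by rw [hDdef, geom_sum_succ]
      -- inf comparison
      rw [huFix x a ha, huFix y a ha]
      have hAx : Aop lam h N g f u x a = sInf (S x a) := rfl
      have hAy : Aop lam h N g f u y a = sInf (S y a) := rfl
      rw [hAx, hAy, abs_sub_le_iff]
      constructor
      · rw [sub_le_iff_le_add, add_comm, ← sub_le_iff_le_add]
        apply le_csInf (hSne y a ha)
        rintro v ⟨b, hb, hab, rfl⟩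
        have hmem : (1 - lam * h) * u x' b + h * f x a ∈ S x a := ⟨b, hb, hab, rfl⟩
        have h1 := csInf_le (hSbdd x a ha) hmem
        have h2 := (abs_le.mp (hmain b hb)).2
        linarith
      · rw [sub_le_iff_le_add, add_comm, ← sub_le_iff_le_add]
        apply le_csInf (hSne x a ha)
        rintro v ⟨b, hb, hab, rfl⟩
        have hmem : (1 - lam * h) * u y' b + h * f y a ∈ S y a := ⟨b, hb, hab, rfl⟩
        have h1 := csInf_le (hSbdd y a ha) hmem
        have h2 := (abs_le.mp (hmain b hb)).1
        linarith
  -- geometric sum bound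
  have hgeom : ∀ n : ℕ, (∑ k ∈ Finset.range n, q ^ k) ≤ 1 / (1 - q) := by
    intro n
    rw [le_div_iff₀ (by linarith : (0:ℝ) < 1 - q)]
    have := geom_sum_mul q n
    nlinarith [pow_nonneg hq0 n]
  -- conclusion
  intro x y a ha
  refine le_of_forall_pos_le_add ?_
  intro ε hε
  obtain ⟨n, hn⟩ := exists_pow_lt_of_lt_one (x := ε / (2 * M + 1))
    (by positivity) (by nlinarith [mul_pos hlam hh] : 1 - lam * h < 1)
  have hkey := key n x y a ha
  have hb1 : h * Lf * ‖x - y‖ * (∑ k ∈ Finset.range n, q ^ k)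
      ≤ Lf / (lam - Lg) * ‖x - y‖ := by
    have hsum0 : (0:ℝ) ≤ ∑ k ∈ Finset.range n, q ^ k :=
      Finset.sum_nonneg fun k _ => pow_nonneg hq0 k
    have h1 : (∑ k ∈ Finset.range n, q ^ k) ≤ 1 / ((lam - Lg) * h) := by
      refine (hgeom n).trans ?_
      apply one_div_le_one_div_of_le (mul_pos hgl hh)
      linarith
    calc h * Lf * ‖x - y‖ * (∑ k ∈ Finset.range n, q ^ k)
        ≤ h * Lf * ‖x - y‖ * (1 / ((lam - Lg) * h)) := by gcongr
      _ = Lf / (lam - Lg) * ‖x - y‖ := by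
          rw [mul_one_div, div_mul_eq_mul_div, div_eq_div_iff (by positivity) hgl.ne']
          ring
  have hb2 : (1 - lam * h) ^ n * (2 * M) ≤ ε := by
    have hp0 : (0:ℝ) ≤ (1 - lam * h) ^ n := pow_nonneg hlh0 n
    rw [lt_div_iff₀ (by positivity : (0:ℝ) < 2 * M + 1)] at hn
    nlinarith
  linarith
end
end

section
/- Fix a ∈ [0,1], b ∈ I_h and ρ > 0, and let w : ℝ^ν × I_h → ℝ be bounded with w(·,b) Lipschitz continuous with constant L_w. Define (A^{h,b} w)(x,a) := (1−λh)·w(x + h·g(x,a), b) + h·f(x,a). Then for every x ∈ ℝ^ν, the commutator of A^{h,b} with mollification satisfies |((A^{h,b} w)(·,a) ⋆ β_ρ)(x) − [(1−λh)·(w(·,b) ⋆ β_ρ)(x + h·g(x,a)) + h·f(x,a)]| ≤ (1−λh)·L_w·L_g·ρ·h + L_f·ρ·h. -/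
noncomputable section

open MeasureTheory

lemma comm_aux {ν : ℕ} (G₁ G₂ φ : E ν → ℝ) (K : ℝ)
    (int1 : Integrable (fun y => G₁ y * φ y))
    (int2 : Integrable (fun y => G₂ y * φ y))
    (intφ : Integrable φ)
    (hφ0 : ∀ y, 0 ≤ φ y) (hφ1 : ∫ y, φ y = 1)
    (hbound : ∀ y, φ y ≠ 0 → |G₁ y - G₂ y| ≤ K) :
    |(∫ y, G₁ y * φ y) - ∫ y, G₂ y * φ y| ≤ K := by
  rw [← integral_sub int1 int2]
  calc |∫ y, (G₁ y * φ y - G₂ y * φ y)|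
      ≤ ∫ y, K * φ y := by
        rw [← Real.norm_eq_abs]
        refine norm_integral_le_of_norm_le (intφ.const_mul K) (ae_of_all _ fun y => ?_)
        rw [Real.norm_eq_abs, show G₁ y * φ y - G₂ y * φ y = (G₁ y - G₂ y) * φ y by ring,
          abs_mul, abs_of_nonneg (hφ0 y)]
        rcases eq_or_ne (φ y) 0 with hy | hy
        · simp [hy]
        · exact mul_le_mul_of_nonneg_right (hbound y hy) (hφ0 y)
    _ = K := by rw [integral_const_mul, hφ1, mul_one]

theorem commutator_mollification {ν : ℕ} (hν : 1 ≤ ν)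
    (lam h : ℝ) (hlam : 0 < lam) (hh : 0 < h) (hhl : h < 1 / lam)
    (N : ℕ) (hN : 0 < N) (hNh : (N : ℝ) * h = 1)
    (g : E ν → ℝ → E ν) (f : E ν → ℝ → ℝ)
    (Lg Mg Lf Mf : ℝ) (hLg : 0 < Lg) (hMg : 0 < Mg) (hLf : 0 < Lf) (hMf : 0 < Mf)
    (hgLip : ∀ x x' : E ν, ∀ a ∈ Set.Icc (0:ℝ) 1, ∀ a' ∈ Set.Icc (0:ℝ) 1,
      ‖g x a - g x' a'‖ ≤ Lg * (‖x - x'‖ + |a - a'|))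
    (hgBdd : ∀ x : E ν, ∀ a ∈ Set.Icc (0:ℝ) 1, ‖g x a‖ ≤ Mg)
    (hfLip : ∀ x x' : E ν, ∀ a ∈ Set.Icc (0:ℝ) 1, ∀ a' ∈ Set.Icc (0:ℝ) 1,
      |f x a - f x' a'| ≤ Lf * (‖x - x'‖ + |a - a'|))
    (hfBdd : ∀ x : E ν, ∀ a ∈ Set.Icc (0:ℝ) 1, |f x a| ≤ Mf)
    (β : E ν → ℝ) (hβsmooth : ContDiff ℝ (⊤ : ℕ∞) β) (hβpos : ∀ x, 0 ≤ β x)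
    (hβsupp : Function.support β ⊆ Metric.closedBall 0 1)
    (hβint : ∫ x, β x = 1)
    (a : ℝ) (ha : a ∈ Set.Icc (0:ℝ) 1) (b : ℝ) (hb : b ∈ Ih h N)
    (ρ : ℝ) (hρ : 0 < ρ)
    (w : E ν → ℝ → ℝ)
    (hwBdd : ∃ M : ℝ, ∀ (x : E ν) (c : ℝ), |w x c| ≤ M)
    (Lw : ℝ) (hwLip : ∀ x y : E ν, |w x b - w y b| ≤ Lw * ‖x - y‖)
    (x : E ν) :
    |(∫ y : E ν, ((1 - lam * h) * w (x - y + h • g (x - y) a) b + h * f (x - y) a) *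
          ((ρ ^ ν)⁻¹ * β (ρ⁻¹ • y)))
        - ((1 - lam * h) *
            (∫ y : E ν, w (x + h • g x a - y) b * ((ρ ^ ν)⁻¹ * β (ρ⁻¹ • y)))
          + h * f x a)|
      ≤ (1 - lam * h) * Lw * Lg * ρ * h + Lf * ρ * h := by
  have hc0 : 0 ≤ 1 - lam * h := by
    have := (lt_div_iff₀ hlam).mp hhl
    nlinarith
  -- Lw is nonnegative
  have hLw0 : 0 ≤ Lw := by
    have hnz : (EuclideanSpace.single (⟨0, hν⟩ : Fin ν) (1:ℝ)) ≠ 0 := by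
      intro hcon
      have := congrArg (fun v : E ν => v ⟨0, hν⟩) hcon
      simp [EuclideanSpace.single] at this
    have hn : 0 < ‖EuclideanSpace.single (⟨0, hν⟩ : Fin ν) (1:ℝ)‖ := norm_pos_iff.mpr hnz
    have h1 := hwLip (EuclideanSpace.single (⟨0, hν⟩ : Fin ν) (1:ℝ)) 0
    rw [sub_zero] at h1
    nlinarith [abs_nonneg (w (EuclideanSpace.single (⟨0, hν⟩ : Fin ν) (1:ℝ)) b - w 0 b)]
  -- continuity facts
  have hwcont : Continuous (fun z : E ν => w z b) := by
    have : LipschitzWith Lw.toNNReal (fun z : E ν => w z b) := by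
      refine LipschitzWith.of_dist_le_mul fun p q => ?_
      rw [Real.dist_eq, dist_eq_norm, Real.coe_toNNReal _ hLw0]
      exact hwLip p q
    exact this.continuous
  have hgcont : Continuous (fun z : E ν => g z a) := by
    have : LipschitzWith Lg.toNNReal (fun z : E ν => g z a) := by
      refine LipschitzWith.of_dist_le_mul fun p q => ?_
      rw [dist_eq_norm, dist_eq_norm, Real.coe_toNNReal _ hLg.le]
      simpa using hgLip p q a ha a ha
    exact this.continuous
  have hfcont : Continuous (fun z : E ν => f z a) := by
    have : LipschitzWith Lf.toNNReal (fun z : E ν => f z a) := by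
      refine LipschitzWith.of_dist_le_mul fun p q => ?_
      rw [Real.dist_eq, dist_eq_norm, Real.coe_toNNReal _ hLf.le]
      simpa using hfLip p q a ha a ha
    exact this.continuous
  -- the mollifier
  set φ : E ν → ℝ := fun y => (ρ ^ ν)⁻¹ * β (ρ⁻¹ • y) with hφdef
  have hφ0 : ∀ y, 0 ≤ φ y := fun y => mul_nonneg (by positivity) (hβpos _)
  have hφcont : Continuous φ :=
    continuous_const.mul (hβsmooth.continuous.comp (continuous_const_smul _))
  have hφcs : HasCompactSupport φ := by
    refine HasCompactSupport.of_support_subset_isCompact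
      (isCompact_closedBall (0 : E ν) ρ) fun y hy => ?_
    have hβy : β (ρ⁻¹ • y) ≠ 0 := by
      intro hcon
      apply hy
      simp [hφdef, hcon]
    have : ρ⁻¹ • y ∈ Metric.closedBall (0 : E ν) 1 := hβsupp hβy
    rw [Metric.mem_closedBall, dist_zero_right] at this ⊢
    rw [norm_smul, norm_inv, Real.norm_eq_abs, abs_of_pos hρ] at this
    calc ‖y‖ = ρ * (ρ⁻¹ * ‖y‖) := by field_simp
    _ ≤ ρ * 1 := by nlinarith
    _ = ρ := mul_one ρ
  have hφint : Integrable φ := hφcont.integrable_of_hasCompactSupport hφcs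
  have hφ1 : ∫ y, φ y = 1 := by
    rw [hφdef]
    rw [MeasureTheory.integral_const_mul,
      MeasureTheory.Measure.integral_comp_inv_smul_of_nonneg volume β hρ.le,
      finrank_euclideanSpace_fin, smul_eq_mul, hβint, mul_one,
      inv_mul_cancel₀ (by positivity)]
  have hφsmall : ∀ y : E ν, φ y ≠ 0 → ‖y‖ ≤ ρ := by
    intro y hy
    have hβy : β (ρ⁻¹ • y) ≠ 0 := fun hcon => hy (by simp [hφdef, hcon])
    have h2 : ρ⁻¹ • y ∈ Metric.closedBall (0 : E ν) 1 := hβsupp hβy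
    rw [Metric.mem_closedBall, dist_zero_right, norm_smul, norm_inv,
      Real.norm_eq_abs, abs_of_pos hρ] at h2
    calc ‖y‖ = ρ * (ρ⁻¹ * ‖y‖) := by field_simp
    _ ≤ ρ * 1 := by nlinarith
    _ = ρ := mul_one ρ
  -- the two functions
  set G₁ : E ν → ℝ :=
    fun y => (1 - lam * h) * w (x - y + h • g (x - y) a) b + h * f (x - y) a with hG₁def
  set G₂ : E ν → ℝ :=
    fun y => (1 - lam * h) * w (x + h • g x a - y) b + h * f x a with hG₂def
  have hG₁cont : Continuous G₁ := by
    apply Continuous.add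
    · exact continuous_const.mul (hwcont.comp ((continuous_const.sub continuous_id).add
        ((hgcont.comp (continuous_const.sub continuous_id)).const_smul h)))
    · exact continuous_const.mul (hfcont.comp (continuous_const.sub continuous_id))
  have hG₂cont : Continuous G₂ :=
    (continuous_const.mul (hwcont.comp (continuous_const.sub continuous_id))).add
      continuous_const
  have int1 : Integrable (fun y => G₁ y * φ y) :=
    (hG₁cont.mul hφcont).integrable_of_hasCompactSupport (hφcs.mul_left)
  have int2 : Integrable (fun y => G₂ y * φ y) :=
    (hG₂cont.mul hφcont).integrable_of_hasCompactSupport (hφcs.mul_left)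
  have intw : Integrable (fun y => w (x + h • g x a - y) b * φ y) :=
    ((hwcont.comp (continuous_const.sub continuous_id)).mul
      hφcont).integrable_of_hasCompactSupport (hφcs.mul_left)
  -- rewrite the second term as an integral against φ
  have e2 : (1 - lam * h) * (∫ y, w (x + h • g x a - y) b * φ y) + h * f x a
      = ∫ y, G₂ y * φ y := by
    have : ∀ y, G₂ y * φ y
        = (1 - lam * h) * (w (x + h • g x a - y) b * φ y) + (h * f x a) * φ y := by
      intro y; simp only [hG₂def]; ring
    rw [show (fun y => G₂ y * φ y) = fun y =>
        (1 - lam * h) * (w (x + h • g x a - y) b * φ y) + (h * f x a) * φ y from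
      funext this]
    rw [integral_add (intw.const_mul _) (hφint.const_mul _), integral_const_mul,
      integral_const_mul, hφ1, mul_one]
  rw [e2]
  -- the pointwise commutator bound
  refine comm_aux G₁ G₂ φ _ int1 int2 hφint hφ0 hφ1 fun y hy => ?_
  have hyρ : ‖y‖ ≤ ρ := hφsmall y hy
  have hgd : ‖g (x - y) a - g x a‖ ≤ Lg * ‖y‖ := by
    have := hgLip (x - y) x a ha a ha
    simpa using this
  have hwd : |w (x - y + h • g (x - y) a) b - w (x + h • g x a - y) b|
      ≤ Lw * (h * (Lg * ‖y‖)) := by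
    have h1 := hwLip (x - y + h • g (x - y) a) (x + h • g x a - y)
    have h2 : (x - y + h • g (x - y) a) - (x + h • g x a - y)
        = h • (g (x - y) a - g x a) := by
      rw [smul_sub]; abel
    rw [h2, norm_smul, Real.norm_eq_abs, abs_of_pos hh] at h1
    calc |w (x - y + h • g (x - y) a) b - w (x + h • g x a - y) b|
        ≤ Lw * (h * ‖g (x - y) a - g x a‖) := h1
    _ ≤ Lw * (h * (Lg * ‖y‖)) := by
        apply mul_le_mul_of_nonneg_left _ hLw0
        exact mul_le_mul_of_nonneg_left hgd hh.le
  have hfd : |f (x - y) a - f x a| ≤ Lf * ‖y‖ := by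
    have := hfLip (x - y) x a ha a ha
    simpa using this
  have hG : G₁ y - G₂ y
      = (1 - lam * h) * (w (x - y + h • g (x - y) a) b - w (x + h • g x a - y) b)
        + h * (f (x - y) a - f x a) := by
    simp only [hG₁def, hG₂def]; ring
  rw [hG]
  calc |(1 - lam * h) * (w (x - y + h • g (x - y) a) b - w (x + h • g x a - y) b)
        + h * (f (x - y) a - f x a)|
      ≤ |(1 - lam * h) * (w (x - y + h • g (x - y) a) b - w (x + h • g x a - y) b)|
        + |h * (f (x - y) a - f x a)| := abs_add_le _ _
    _ ≤ (1 - lam * h) * (Lw * (h * (Lg * ‖y‖))) + h * (Lf * ‖y‖) := by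
        rw [abs_mul, abs_mul, abs_of_nonneg hc0, abs_of_pos hh]
        exact add_le_add (mul_le_mul_of_nonneg_left hwd hc0)
          (mul_le_mul_of_nonneg_left hfd hh.le)
    _ ≤ (1 - lam * h) * Lw * Lg * ρ * h + Lf * ρ * h := by
        nlinarith [mul_nonneg (mul_nonneg (mul_nonneg (mul_nonneg hc0 hLw0) hh.le) hLg.le)
            (sub_nonneg.mpr hyρ),
          mul_nonneg (mul_nonneg hh.le hLf.le) (sub_nonneg.mpr hyρ)]
end
end
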